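/- Fix N ≥ 1, κ, m, t₀ > 0, vectors ν, ω⁰ ∈ ℝ^N, and a point θ*(t₀) = (θ*₁(t₀),…,θ*_N(t₀)) ∈ ℝ^N. For a continuous map Ω* = (ω*₁,…,ω*_N) : [0,t₀] → ℝ^N define, for i ∈ {1,…,N} and t ∈ [0,t₀], fᵢ(Ω*)(t) = ωᵢ⁰ e^{−t/m} + νᵢ(1 − e^{−t/m}) + (κ/(Nm)) ∑_{l=1}^N ∫₀ᵗ e^{−(t−σ)/m} sin( θ*_l(t₀) − θ*_i(t₀) − ∫_σ^{t₀} (ω*_l(τ) − ω*_i(τ)) dτ ) dσ. Then for any two continuous maps Ω*, Ω̃* : [0,t₀] → ℝ^N, max_{i∈[N]} sup_{t∈[0,t₀]} |fᵢ(Ω*)(t) − fᵢ(Ω̃*)(t)| ≤ min{2κt₀, κt₀²/m} · max_{i∈[N]} sup_{t∈[0,t₀]} |ω*_i(t) − ω̃*_i(t)|; that is, the map F = (f₁,…,f_N) is min{2κt₀, κt₀²/m}-Lipschitz with respect to the supremum norm. -/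

import Mathlib

open Filter Topology MeasureTheory intervalIntegral

noncomputable section

/-- A global smooth solution of the inertial Kuramoto model
`m θ̈ᵢ + θ̇ᵢ = νᵢ + (κ/N) ∑ⱼ sin(θⱼ - θᵢ)` with initial data `θᵢ(0) = θ0 i`,
`θ̇ᵢ(0) = ω0 i`. -/
def IsInertialSol (N : ℕ) (m κ : ℝ) (ν θ0 ω0 : Fin N → ℝ) (θ : Fin N → ℝ → ℝ) : Prop :=
  (∀ i, ContDiff ℝ (⊤ : ℕ∞) (θ i)) ∧
  (∀ i, θ i 0 = θ0 i) ∧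
  (∀ i, deriv (θ i) 0 = ω0 i) ∧
  (∀ i, ∀ t : ℝ, 0 ≤ t →
    m * deriv (deriv (θ i)) t + deriv (θ i) t
      = ν i + (κ / N) * ∑ j, Real.sin (θ j t - θ i t))

/-- A global smooth solution of the first-order Kuramoto model
`θ̇ᵢ = νᵢ + (κ/N) ∑ⱼ sin(θⱼ - θᵢ)` with initial data `θᵢ(0) = θ0 i`. -/
def IsFirstOrderSol (N : ℕ) (κ : ℝ) (ν θ0 : Fin N → ℝ) (θ : Fin N → ℝ → ℝ) : Prop :=
  (∀ i, ContDiff ℝ (⊤ : ℕ∞) (θ i)) ∧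
  (∀ i, θ i 0 = θ0 i) ∧
  (∀ i, ∀ t : ℝ, 0 ≤ t →
    deriv (θ i) t = ν i + (κ / N) * ∑ j, Real.sin (θ j t - θ i t))

lemma abs_sin_sub_sin_le (a b : ℝ) : |Real.sin a - Real.sin b| ≤ |a - b| := by
  rw [Real.sin_sub_sin, abs_mul, abs_mul]
  have h1 : |Real.sin ((a - b) / 2)| ≤ |(a - b) / 2| := Real.abs_sin_le_abs
  have h2 : |Real.cos ((a + b) / 2)| ≤ 1 := Real.abs_cos_le_one _
  calc |(2:ℝ)| * |Real.sin ((a - b) / 2)| * |Real.cos ((a + b) / 2)|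
      ≤ |(2:ℝ)| * |(a - b) / 2| * 1 := by gcongr
    _ = |a - b| := by rw [abs_div, mul_one]; simp [abs_of_nonneg]; ring

/-- Proposition 5.1 (2): the Duhamel iteration map `F` is
`min{2κt₀, κt₀²/m}`-Lipschitz in the supremum norm. -/
theorem stmt11 (N : ℕ) (hN : 1 ≤ N) (κ m t₀ : ℝ)
    (hκ : 0 < κ) (hm : 0 < m) (ht₀ : 0 < t₀)
    (ν ω0 θstar : Fin N → ℝ)
    (Ω Ω' : Fin N → ℝ → ℝ)
    (hΩ : ∀ i, ContinuousOn (Ω i) (Set.Icc 0 t₀))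
    (hΩ' : ∀ i, ContinuousOn (Ω' i) (Set.Icc 0 t₀)) :
    ∀ i, ∀ t ∈ Set.Icc (0 : ℝ) t₀,
      |(ω0 i * Real.exp (-t / m) + ν i * (1 - Real.exp (-t / m)) +
          κ / (N * m) * ∑ l, ∫ σ in (0 : ℝ)..t,
            Real.exp (-(t - σ) / m) *
              Real.sin (θstar l - θstar i - ∫ τ in σ..t₀, (Ω l τ - Ω i τ))) -
        (ω0 i * Real.exp (-t / m) + ν i * (1 - Real.exp (-t / m)) +
          κ / (N * m) * ∑ l, ∫ σ in (0 : ℝ)..t,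
            Real.exp (-(t - σ) / m) *
              Real.sin (θstar l - θstar i - ∫ τ in σ..t₀, (Ω' l τ - Ω' i τ)))| ≤
        min (2 * κ * t₀) (κ * t₀ ^ 2 / m) *
          ⨆ j, ⨆ s : Set.Icc (0 : ℝ) t₀, |Ω j s - Ω' j s| := by
  intro i t ht
  obtain ⟨ht0, htt0⟩ := ht
  have hNpos : (0:ℝ) < N := by exact_mod_cast Nat.lt_of_lt_of_le Nat.zero_lt_one hN
  set M : ℝ := ⨆ j, ⨆ s : Set.Icc (0:ℝ) t₀, |Ω j s - Ω' j s| with hMdef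
  -- boundedness facts
  have hDcont : ∀ j, ContinuousOn (fun s => |Ω j s - Ω' j s|) (Set.Icc 0 t₀) :=
    fun j => ((hΩ j).sub (hΩ' j)).abs
  have hbdd : ∀ j, BddAbove (Set.range fun s : Set.Icc (0:ℝ) t₀ => |Ω j s - Ω' j s|) := by
    intro j
    obtain ⟨C, hC⟩ := isCompact_Icc.exists_bound_of_continuousOn (hDcont j)
    refine ⟨C, ?_⟩
    rintro _ ⟨s, rfl⟩
    have := hC s s.2
    rwa [Real.norm_eq_abs, abs_abs] at this
  have hMle : ∀ j, ∀ s : Set.Icc (0:ℝ) t₀, |Ω j s - Ω' j s| ≤ M := by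
    intro j s
    calc |Ω j s - Ω' j s| ≤ ⨆ s : Set.Icc (0:ℝ) t₀, |Ω j s - Ω' j s| := le_ciSup (hbdd j) s
      _ ≤ M := le_ciSup (f := fun j => ⨆ s : Set.Icc (0:ℝ) t₀, |Ω j s - Ω' j s|)
          (Set.finite_range _).bddAbove j
  have hM0 : 0 ≤ M :=
    le_trans (abs_nonneg _) (hMle i ⟨0, le_rfl, ht₀.le⟩)
  -- integrability of the Ωs
  have hint : ∀ (f : ℝ → ℝ), ContinuousOn f (Set.Icc 0 t₀) →
      ∀ a ∈ Set.Icc (0:ℝ) t₀, ∀ b ∈ Set.Icc (0:ℝ) t₀, IntervalIntegrable f volume a b := by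
    intro f hf a ha b hb
    exact (hf.mono (Set.uIcc_subset_Icc ha hb)).intervalIntegrable
  -- the two sin arguments and the inner-difference estimate
  have harg : ∀ l : Fin N, ∀ σ ∈ Set.Icc (0:ℝ) t₀,
      |(∫ τ in σ..t₀, (Ω l τ - Ω i τ)) - ∫ τ in σ..t₀, (Ω' l τ - Ω' i τ)| ≤ 2 * M * (t₀ - σ) := by
    intro l σ hσ
    have h1 : IntervalIntegrable (fun τ => Ω l τ - Ω i τ) volume σ t₀ :=
      hint _ ((hΩ l).sub (hΩ i)) σ hσ t₀ ⟨ht₀.le, le_rfl⟩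
    have h2 : IntervalIntegrable (fun τ => Ω' l τ - Ω' i τ) volume σ t₀ :=
      hint _ ((hΩ' l).sub (hΩ' i)) σ hσ t₀ ⟨ht₀.le, le_rfl⟩
    rw [← intervalIntegral.integral_sub h1 h2]
    have hbd : ∀ x ∈ Set.uIoc σ t₀,
        ‖(Ω l x - Ω i x) - (Ω' l x - Ω' i x)‖ ≤ 2 * M := by
      intro x hx
      have hxm : x ∈ Set.Icc (0:ℝ) t₀ := by
        constructor
        · exact le_trans (le_min hσ.1 ht₀.le) hx.1.le
        · exact le_trans hx.2 (max_le hσ.2 le_rfl)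
      have e1 := hMle l ⟨x, hxm⟩
      have e2 := hMle i ⟨x, hxm⟩
      calc ‖(Ω l x - Ω i x) - (Ω' l x - Ω' i x)‖
          = |(Ω l x - Ω' l x) - (Ω i x - Ω' i x)| := by rw [Real.norm_eq_abs]; ring_nf
        _ ≤ |Ω l x - Ω' l x| + |Ω i x - Ω' i x| := abs_sub _ _
        _ ≤ M + M := add_le_add e1 e2
        _ = 2 * M := by ring
    have := intervalIntegral.norm_integral_le_of_norm_le_const hbd
    rw [Real.norm_eq_abs] at this
    calc |∫ τ in σ..t₀, ((Ω l τ - Ω i τ) - (Ω' l τ - Ω' i τ))| ≤ 2 * M * |t₀ - σ| := this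
      _ = 2 * M * (t₀ - σ) := by rw [abs_of_nonneg (by linarith [hσ.2])]
  -- define the integrands
  set P : Fin N → ℝ → ℝ := fun l σ => Real.exp (-(t - σ) / m) *
      Real.sin (θstar l - θstar i - ∫ τ in σ..t₀, (Ω l τ - Ω i τ)) with hP
  set Q : Fin N → ℝ → ℝ := fun l σ => Real.exp (-(t - σ) / m) *
      Real.sin (θstar l - θstar i - ∫ τ in σ..t₀, (Ω' l τ - Ω' i τ)) with hQ
  -- continuity of the inner primitives
  have htail : ∀ (f : ℝ → ℝ), ContinuousOn f (Set.Icc 0 t₀) →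
      ContinuousOn (fun σ => ∫ τ in σ..t₀, f τ) (Set.Icc 0 t₀) := by
    intro f hf
    have h1 : IntegrableOn f (Set.uIcc 0 t₀) volume := by
      rw [Set.uIcc_of_le ht₀.le]
      exact hf.integrableOn_Icc
    have := intervalIntegral.continuousOn_primitive_interval_left h1
    rwa [Set.uIcc_of_le ht₀.le] at this
  have hPcont : ∀ l, ContinuousOn (P l) (Set.Icc 0 t₀) := by
    intro l
    apply ContinuousOn.mul
    · exact (Real.continuous_exp.comp
        ((continuous_const.sub continuous_id).neg.div_const m)).continuousOn
    · exact Real.continuous_sin.comp_continuousOn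
        (continuousOn_const.sub (htail _ ((hΩ l).sub (hΩ i))))
  have hQcont : ∀ l, ContinuousOn (Q l) (Set.Icc 0 t₀) := by
    intro l
    apply ContinuousOn.mul
    · exact (Real.continuous_exp.comp
        ((continuous_const.sub continuous_id).neg.div_const m)).continuousOn
    · exact Real.continuous_sin.comp_continuousOn
        (continuousOn_const.sub (htail _ ((hΩ' l).sub (hΩ' i))))
  have hPint : ∀ l, IntervalIntegrable (P l) volume 0 t :=
    fun l => hint _ (hPcont l) 0 ⟨le_rfl, ht₀.le⟩ t ⟨ht0, htt0⟩
  have hQint : ∀ l, IntervalIntegrable (Q l) volume 0 t :=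
    fun l => hint _ (hQcont l) 0 ⟨le_rfl, ht₀.le⟩ t ⟨ht0, htt0⟩
  -- pointwise bound on the difference
  have hptw : ∀ l : Fin N, ∀ σ ∈ Set.uIoc (0:ℝ) t,
      ‖P l σ - Q l σ‖ ≤ Real.exp (-(t - σ) / m) * (2 * M * (t₀ - σ)) := by
    intro l σ hσ
    have hσm : σ ∈ Set.Icc (0:ℝ) t₀ := by
      rw [Set.uIoc_of_le ht0] at hσ
      exact ⟨hσ.1.le, hσ.2.trans htt0⟩
    have h1 : ‖P l σ - Q l σ‖ = Real.exp (-(t - σ) / m) *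
        |Real.sin (θstar l - θstar i - ∫ τ in σ..t₀, (Ω l τ - Ω i τ)) -
         Real.sin (θstar l - θstar i - ∫ τ in σ..t₀, (Ω' l τ - Ω' i τ))| := by
      rw [hP, hQ, Real.norm_eq_abs, ← mul_sub, abs_mul, abs_of_nonneg (Real.exp_pos _).le]
    rw [h1]
    refine mul_le_mul_of_nonneg_left ?_ (Real.exp_pos _).le
    calc |Real.sin (θstar l - θstar i - ∫ τ in σ..t₀, (Ω l τ - Ω i τ)) -
         Real.sin (θstar l - θstar i - ∫ τ in σ..t₀, (Ω' l τ - Ω' i τ))|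
        ≤ |(θstar l - θstar i - ∫ τ in σ..t₀, (Ω l τ - Ω i τ)) -
           (θstar l - θstar i - ∫ τ in σ..t₀, (Ω' l τ - Ω' i τ))| := abs_sin_sub_sin_le _ _
      _ = |(∫ τ in σ..t₀, (Ω l τ - Ω i τ)) - ∫ τ in σ..t₀, (Ω' l τ - Ω' i τ)| := by
          rw [← abs_neg]; congr 1; ring
      _ ≤ 2 * M * (t₀ - σ) := harg l σ hσm
  -- exponential integral computation
  have hexpint : (∫ σ in (0:ℝ)..t, Real.exp (-(t - σ) / m)) = m * (1 - Real.exp (-t / m)) := by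
    have : ∀ σ : ℝ, Real.exp (-(t - σ) / m) = Real.exp ((σ - t) / m) := by
      intro σ; ring_nf
    simp_rw [this]
    rw [intervalIntegral.integral_comp_sub_right (fun u => Real.exp (u / m)) t,
      intervalIntegral.integral_comp_div (f := Real.exp) hm.ne', integral_exp]
    simp
  -- bound 1 : |∫ (P - Q)| ≤ 2 M t₀ m
  have hbound1 : ∀ l : Fin N, |∫ σ in (0:ℝ)..t, (P l σ - Q l σ)| ≤ 2 * M * t₀ * m := by
    intro l
    have hg : IntervalIntegrable (fun σ => Real.exp (-(t - σ) / m) * (2 * M * t₀))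
        volume 0 t := by
      exact ((Real.continuous_exp.comp
        ((continuous_const.sub continuous_id).neg.div_const m)).mul
        continuous_const).intervalIntegrable _ _
    have hb : ∀ᵐ σ ∂(volume.restrict (Set.uIoc (0:ℝ) t)),
        ‖P l σ - Q l σ‖ ≤ Real.exp (-(t - σ) / m) * (2 * M * t₀) := by
      refine (ae_restrict_iff' measurableSet_uIoc).2 (ae_of_all _ ?_)
      intro σ hσ
      refine (hptw l σ hσ).trans ?_
      refine mul_le_mul_of_nonneg_left ?_ (Real.exp_pos _).le
      have : σ ∈ Set.Ioc 0 t := by rwa [Set.uIoc_of_le ht0] at hσ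
      nlinarith [this.1, hM0]
    have := intervalIntegral.norm_integral_le_abs_of_norm_le hb hg
    rw [Real.norm_eq_abs] at this
    refine this.trans ?_
    rw [intervalIntegral.integral_mul_const, hexpint]
    have he0 : (0:ℝ) ≤ Real.exp (-t / m) := (Real.exp_pos _).le
    have he1 : Real.exp (-t / m) ≤ 1 :=
      Real.exp_le_one_iff.2 (div_nonpos_of_nonpos_of_nonneg (by linarith) hm.le)
    have h2 : (0:ℝ) ≤ 2 * M * t₀ := by positivity
    have h3 : (0:ℝ) ≤ 1 - Real.exp (-t / m) := by linarith
    rw [abs_of_nonneg (mul_nonneg (mul_nonneg hm.le h3) h2)]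
    nlinarith [mul_nonneg (mul_nonneg hm.le h2) he0]
  -- bound 2 : |∫ (P - Q)| ≤ M t₀²
  have hbound2 : ∀ l : Fin N, |∫ σ in (0:ℝ)..t, (P l σ - Q l σ)| ≤ M * t₀ ^ 2 := by
    intro l
    have hg : IntervalIntegrable (fun σ => 2 * M * (t₀ - σ)) volume 0 t := by
      exact (continuous_const.mul
        (continuous_const.sub continuous_id)).intervalIntegrable _ _
    have hb : ∀ᵐ σ ∂(volume.restrict (Set.uIoc (0:ℝ) t)),
        ‖P l σ - Q l σ‖ ≤ 2 * M * (t₀ - σ) := by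
      refine (ae_restrict_iff' measurableSet_uIoc).2 (ae_of_all _ ?_)
      intro σ hσ
      refine (hptw l σ hσ).trans ?_
      have hio : σ ∈ Set.Ioc 0 t := by rwa [Set.uIoc_of_le ht0] at hσ
      have h1 : Real.exp (-(t - σ) / m) ≤ 1 :=
        Real.exp_le_one_iff.2 (div_nonpos_of_nonpos_of_nonneg (by linarith [hio.2]) hm.le)
      have h2 : 0 ≤ 2 * M * (t₀ - σ) := by
        have := hio.2.trans htt0
        nlinarith
      nlinarith [(Real.exp_pos (-(t - σ) / m)).le]
    have := intervalIntegral.norm_integral_le_abs_of_norm_le hb hg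
    rw [Real.norm_eq_abs] at this
    refine this.trans ?_
    have hval : (∫ σ in (0:ℝ)..t, 2 * M * (t₀ - σ)) = 2 * M * (t₀ * t - t ^ 2 / 2) := by
      rw [intervalIntegral.integral_const_mul]
      rw [intervalIntegral.integral_sub intervalIntegrable_const intervalIntegrable_id]
      rw [intervalIntegral.integral_const, integral_id, smul_eq_mul]
      ring
    have h4 : (0:ℝ) ≤ t₀ * t - t ^ 2 / 2 := by nlinarith
    rw [hval, abs_of_nonneg (mul_nonneg (by positivity) h4)]
    nlinarith [mul_nonneg hM0 (sq_nonneg (t₀ - t))]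
  -- assemble
  have hsum : (ω0 i * Real.exp (-t / m) + ν i * (1 - Real.exp (-t / m)) +
          κ / (N * m) * ∑ l, ∫ σ in (0 : ℝ)..t, P l σ) -
        (ω0 i * Real.exp (-t / m) + ν i * (1 - Real.exp (-t / m)) +
          κ / (N * m) * ∑ l, ∫ σ in (0 : ℝ)..t, Q l σ)
      = κ / (N * m) * ∑ l, ∫ σ in (0:ℝ)..t, (P l σ - Q l σ) := by
    have : ∀ l : Fin N, (∫ σ in (0:ℝ)..t, (P l σ - Q l σ))
        = (∫ σ in (0:ℝ)..t, P l σ) - ∫ σ in (0:ℝ)..t, Q l σ :=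
      fun l => intervalIntegral.integral_sub (hPint l) (hQint l)
    simp_rw [this, Finset.sum_sub_distrib]
    ring
  rw [hsum]
  have hc : 0 ≤ κ / (N * m) := by positivity
  have habs : |κ / (N * m) * ∑ l, ∫ σ in (0:ℝ)..t, (P l σ - Q l σ)|
      ≤ κ / (N * m) * ∑ l : Fin N, |∫ σ in (0:ℝ)..t, (P l σ - Q l σ)| := by
    rw [abs_mul, abs_of_nonneg hc]
    exact mul_le_mul_of_nonneg_left (Finset.abs_sum_le_sum_abs _ _) hc
  rw [min_mul_of_nonneg _ _ hM0]
  have hNne : (N:ℝ) ≠ 0 := hNpos.ne'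
  refine le_min ?_ ?_
  · refine habs.trans ?_
    calc κ / (↑N * m) * ∑ l : Fin N, |∫ σ in (0:ℝ)..t, (P l σ - Q l σ)|
        ≤ κ / (↑N * m) * (↑N * (2 * M * t₀ * m)) := by
          refine mul_le_mul_of_nonneg_left ?_ hc
          calc (∑ l : Fin N, |∫ σ in (0:ℝ)..t, (P l σ - Q l σ)|)
              ≤ ∑ _l : Fin N, 2 * M * t₀ * m := Finset.sum_le_sum fun l _ => hbound1 l
            _ = ↑N * (2 * M * t₀ * m) := by
                rw [Finset.sum_const, Finset.card_univ, Fintype.card_fin, nsmul_eq_mul]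
      _ = 2 * κ * t₀ * M := by field_simp
  · refine habs.trans ?_
    calc κ / (↑N * m) * ∑ l : Fin N, |∫ σ in (0:ℝ)..t, (P l σ - Q l σ)|
        ≤ κ / (↑N * m) * (↑N * (M * t₀ ^ 2)) := by
          refine mul_le_mul_of_nonneg_left ?_ hc
          calc (∑ l : Fin N, |∫ σ in (0:ℝ)..t, (P l σ - Q l σ)|)
              ≤ ∑ _l : Fin N, M * t₀ ^ 2 := Finset.sum_le_sum fun l _ => hbound2 l
            _ = ↑N * (M * t₀ ^ 2) := by
                rw [Finset.sum_const, Finset.card_univ, Fintype.card_fin, nsmul_eq_mul]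
      _ = κ * t₀ ^ 2 / m * M := by field_simp
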